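/- arXiv:0705.4161 — 2 statements merged into one kernel-verified Lean document; each statement's English description precedes it below -/
import Mathlib

section
/- In the explicit setup described in the context, let R be an upper bound of ρ on [0,ε]. Then for every f ∈ L_{2,|r|}(ι), the function Sf belongs to L_{2,|r|}(ȷ) and ∫_ȷ |(Sf)(x)|² |r(x)| dx ≤ |α'|·|β'|·R·∫_ι |f(ξ)|² |r(ξ)| dξ. In particular S is a bounded linear operator with operator norm at most (|α'|·|β'|·R)^{1/2}. -/
open MeasureTheory Set Filter

noncomputable section

namespace SL

/-- The measure `|r(x)| dx` on the set `I ⊆ ℝ`; `L_{2,|r|}(I) = Lp ℂ 2 (wM r I)`. -/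
def wM (r : ℝ → ℝ) (I : Set ℝ) : Measure ℝ :=
  (volume.restrict I).withDensity fun x => ENNReal.ofReal |r x|

/-- `g` is absolutely continuous on `[a,b]` with (a.e.) derivative `g'`,
encoded via the fundamental theorem of calculus. -/
def ACOn (g g' : ℝ → ℂ) (a b : ℝ) : Prop :=
  IntervalIntegrable g' volume a b ∧
    ∀ x ∈ Set.Icc a b, g x = g a + ∫ t in a..x, g' t

/-- The function `g` belongs to `F_max([a,b])`: it is square integrable with respect to
`|r| dx` on `[a,b]` and has a representative `g₀`, absolutely continuous on `[a,b]`,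
with `∫_a^b p |g₀'|² < ∞`. -/
def InFmax (p r : ℝ → ℝ) (a b : ℝ) (g : ℝ → ℂ) : Prop :=
  MemLp g 2 (wM r (Set.Icc a b)) ∧
    ∃ g₀ g' : ℝ → ℂ, (g =ᵐ[wM r (Set.Icc a b)] g₀) ∧ ACOn g₀ g' a b ∧
      IntegrableOn (fun x => p x * ‖g' x‖ ^ 2) (Set.Icc a b)

/-- Standing assumptions on the coefficients of the Sturm–Liouville equation. -/
def Coeffs (p q r : ℝ → ℝ) : Prop :=
  IntegrableOn (fun x => 1 / p x) (Set.Icc (-1 : ℝ) 1) ∧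
  IntegrableOn q (Set.Icc (-1 : ℝ) 1) ∧
  IntegrableOn r (Set.Icc (-1 : ℝ) 1) ∧
  ∀ᵐ x ∂(volume.restrict (Set.Icc (-1 : ℝ) 1)), 0 < p x ∧ 0 < x * r x

/-- `h` is a half-neighborhood of `a` (contained in `[-1,1]`): a closed interval of
nonzero length with `a` as an endpoint. -/
def IsHalfNbhd (h : Set ℝ) (a : ℝ) : Prop :=
  (∃ c, -1 ≤ c ∧ c < a ∧ a ≤ 1 ∧ h = Set.Icc c a) ∨
  (∃ d, -1 ≤ a ∧ a < d ∧ d ≤ 1 ∧ h = Set.Icc a d)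

/-- The ordered pair of half-neighborhoods `(ha, hb)` of `a` resp. `b` is smoothly
connected with parameters `α', β', ρ0 = ρ(0)`; the affine functions are
`α t = a + α' t` and `β t = b + β' t`. -/
def SmoothlyConnectedOn (p r : ℝ → ℝ) (ha hb : Set ℝ) (a b α' β' ρ0 : ℝ) : Prop :=
  α' ≠ 0 ∧ β' ≠ 0 ∧
  ∃ (ε τ : ℝ) (ρ ϖ : ℝ → ℝ),
    0 < ε ∧ 0 < τ ∧
    (∀ t ∈ Set.Icc (0 : ℝ) ε, a + α' * t ∈ ha) ∧
    (∀ t ∈ Set.Icc (0 : ℝ) ε, b + β' * t ∈ hb) ∧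
    (∀ t ∈ Set.Icc (0 : ℝ) ε, 0 ≤ ρ t) ∧
    (∀ t ∈ Set.Icc (0 : ℝ) ε, 0 ≤ ϖ t) ∧
    ρ 0 = ρ0 ∧
    (∀ c ∈ Set.Ioc (0 : ℝ) ε, IntegrableOn (fun t => p (a + α' * t)) (Set.Icc c ε)) ∧
    (∀ c ∈ Set.Ioc (0 : ℝ) ε, IntegrableOn (fun t => p (b + β' * t)) (Set.Icc c ε)) ∧
    InFmax p r (min a (a + α' * ε)) (max a (a + α' * ε))
      (fun x => ((ρ ((x - a) / α') : ℝ) : ℂ)) ∧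
    (∀ᵐ t ∂(volume.restrict (Set.Icc (0 : ℝ) ε)), 1 / τ < ϖ t ∧ ϖ t < τ) ∧
    (∀ t ∈ Set.Ioc (0 : ℝ) ε, ρ t = |r (b + β' * t)| / |r (a + α' * t)|) ∧
    (∀ t ∈ Set.Ioc (0 : ℝ) ε, ϖ t = p (b + β' * t) / p (a + α' * t))

/-- Condition at `0`: some ordered pair of half-neighborhoods of `0` is smoothly
connected with parameters satisfying `|α₀'| ≠ |β₀'|·ρ₀(0)`. -/
def CondAt0 (p r : ℝ → ℝ) : Prop :=
  ∃ (ha hb : Set ℝ) (α' β' ρ0 : ℝ), IsHalfNbhd ha 0 ∧ IsHalfNbhd hb 0 ∧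
    SmoothlyConnectedOn p r ha hb 0 0 α' β' ρ0 ∧ |α'| ≠ |β'| * ρ0

/-- Condition at `-1`. -/
def CondAtNeg1 (p r : ℝ → ℝ) : Prop :=
  ∃ (ha hb : Set ℝ) (α' β' ρ0 : ℝ), IsHalfNbhd ha (-1) ∧ IsHalfNbhd hb (-1) ∧
    SmoothlyConnectedOn p r ha hb (-1) (-1) α' β' ρ0 ∧ |α'| ≠ |β'| * ρ0

/-- Condition at `1`. -/
def CondAt1 (p r : ℝ → ℝ) : Prop :=
  ∃ (ha hb : Set ℝ) (α' β' ρ0 : ℝ), IsHalfNbhd ha 1 ∧ IsHalfNbhd hb 1 ∧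
    SmoothlyConnectedOn p r ha hb 1 1 α' β' ρ0 ∧ |α'| ≠ |β'| * ρ0

/-- The Krein inner product `[f,g] = ∫_{-1}^1 f conj(g) r dx` on `L_{2,r}(-1,1)`. -/
def krein0 (r : ℝ → ℝ) (f g : ℝ → ℂ) : ℂ :=
  ∫ x in Set.Icc (-1 : ℝ) 1, f x * (starRingEnd ℂ) (g x) * (r x : ℂ)

end SL
namespace SL

/-- The explicit setup of Section 3: `ι = [min a a₁, max a a₁]` and
`ȷ = [min b b₁, max b b₁]` are the intervals `[-1,0]` or `[0,1]`, regarded as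
half-neighborhoods of `a` resp. `b`, smoothly connected with data
`ε, τ, α t = a + α' t, β t = b + β' t, ρ, ϖ`; the images of `α` and `β` have length
`< 1/2`; `α₁, β₁` are strictly monotonic `C¹` bijections of `[0,1]` onto `ι` resp. `ȷ`
extending `α, β`; and `φ` is a `C¹` cutoff with `φ = 1` on `[0, ε/2]`, `φ = 0` on `[ε,1]`. -/
structure Setup (p r : ℝ → ℝ) where
  a : ℝ
  a1 : ℝ
  b : ℝ
  b1 : ℝ
  hab : (a = -1 ∧ a1 = 0) ∨ (a = 0 ∧ a1 = -1) ∨ (a = 0 ∧ a1 = 1) ∨ (a = 1 ∧ a1 = 0)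
  hbb : (b = -1 ∧ b1 = 0) ∨ (b = 0 ∧ b1 = -1) ∨ (b = 0 ∧ b1 = 1) ∨ (b = 1 ∧ b1 = 0)
  ε : ℝ
  τ : ℝ
  α' : ℝ
  β' : ℝ
  ρ : ℝ → ℝ
  ϖ : ℝ → ℝ
  hε : 0 < ε
  hε1 : ε ≤ 1
  hτ : 0 < τ
  hα' : α' ≠ 0
  hβ' : β' ≠ 0
  mapsα : ∀ t ∈ Set.Icc (0 : ℝ) ε, a + α' * t ∈ Set.Icc (min a a1) (max a a1)
  mapsβ : ∀ t ∈ Set.Icc (0 : ℝ) ε, b + β' * t ∈ Set.Icc (min b b1) (max b b1)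
  ρnn : ∀ t ∈ Set.Icc (0 : ℝ) ε, 0 ≤ ρ t
  ϖnn : ∀ t ∈ Set.Icc (0 : ℝ) ε, 0 ≤ ϖ t
  intpα : ∀ c ∈ Set.Ioc (0 : ℝ) ε, IntegrableOn (fun t => p (a + α' * t)) (Set.Icc c ε)
  intpβ : ∀ c ∈ Set.Ioc (0 : ℝ) ε, IntegrableOn (fun t => p (b + β' * t)) (Set.Icc c ε)
  ρFmax : InFmax p r (min a (a + α' * ε)) (max a (a + α' * ε))
    (fun x => ((ρ ((x - a) / α') : ℝ) : ℂ))
  ϖbdd : ∀ᵐ t ∂(volume.restrict (Set.Icc (0 : ℝ) ε)), 1 / τ < ϖ t ∧ ϖ t < τ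
  ρeq : ∀ t ∈ Set.Ioc (0 : ℝ) ε, ρ t = |r (b + β' * t)| / |r (a + α' * t)|
  ϖeq : ∀ t ∈ Set.Ioc (0 : ℝ) ε, ϖ t = p (b + β' * t) / p (a + α' * t)
  lenα : |α'| * ε < 1 / 2
  lenβ : |β'| * ε < 1 / 2
  α1 : ℝ → ℝ
  β1 : ℝ → ℝ
  φ : ℝ → ℝ
  hα1C : ContDiffOn ℝ 1 α1 (Set.Icc 0 1)
  hβ1C : ContDiffOn ℝ 1 β1 (Set.Icc 0 1)
  hα1mono : StrictMonoOn α1 (Set.Icc (0 : ℝ) 1) ∨ StrictAntiOn α1 (Set.Icc (0 : ℝ) 1)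
  hβ1mono : StrictMonoOn β1 (Set.Icc (0 : ℝ) 1) ∨ StrictAntiOn β1 (Set.Icc (0 : ℝ) 1)
  hα1bij : Set.BijOn α1 (Set.Icc (0 : ℝ) 1) (Set.Icc (min a a1) (max a a1))
  hβ1bij : Set.BijOn β1 (Set.Icc (0 : ℝ) 1) (Set.Icc (min b b1) (max b b1))
  hα1eq : ∀ t ∈ Set.Icc (0 : ℝ) ε, α1 t = a + α' * t
  hβ1eq : ∀ t ∈ Set.Icc (0 : ℝ) ε, β1 t = b + β' * t
  hα1end : α1 0 = a ∧ α1 1 = a1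
  hβ1end : β1 0 = b ∧ β1 1 = b1
  hφmaps : ∀ t ∈ Set.Icc (0 : ℝ) 1, φ t ∈ Set.Icc (0 : ℝ) 1
  hφC : ContDiffOn ℝ 1 φ (Set.Icc 0 1)
  hφ1 : ∀ t ∈ Set.Icc 0 (ε / 2), φ t = 1
  hφ0 : ∀ t ∈ Set.Icc ε 1, φ t = 0

/-- The interval `ι`. -/
def Setup.iInt {p r : ℝ → ℝ} (X : Setup p r) : Set ℝ :=
  Set.Icc (min X.a X.a1) (max X.a X.a1)

/-- The interval `ȷ`. -/
def Setup.jInt {p r : ℝ → ℝ} (X : Setup p r) : Set ℝ :=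
  Set.Icc (min X.b X.b1) (max X.b X.b1)

/-- The operator `S`, `(Sf)(β₁(t)) = |α'| f(α₁(t)) φ(t)`, realized on functions via the
inverse of `β₁` (by the zero-product convention, `f` is a total function). -/
def Setup.Sf {p r : ℝ → ℝ} (X : Setup p r) (f : ℝ → ℂ) (x : ℝ) : ℂ :=
  ((|X.α'| : ℝ) : ℂ) * f (X.α1 (Function.invFunOn X.β1 (Set.Icc 0 1) x)) *
    ((X.φ (Function.invFunOn X.β1 (Set.Icc 0 1) x) : ℝ) : ℂ)

/-- The operator `S*`, `(S*g)(α₁(t)) = |β'| ρ(t) φ(t) g(β₁(t))`, realized on functions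
via the inverse of `α₁`. -/
def Setup.Tf {p r : ℝ → ℝ} (X : Setup p r) (g : ℝ → ℂ) (x : ℝ) : ℂ :=
  ((|X.β'| : ℝ) : ℂ) * ((X.ρ (Function.invFunOn X.α1 (Set.Icc 0 1) x) : ℝ) : ℂ) *
    ((X.φ (Function.invFunOn X.α1 (Set.Icc 0 1) x) : ℝ) : ℂ) *
    g (X.β1 (Function.invFunOn X.α1 (Set.Icc 0 1) x))

end SL
namespace SL

/-! On `β([0,ε])` the operator reads `(Sf)(β t) = |α'| f(α t) φ(t)`, and `Sf` vanishes on the rest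
of `ȷ` because `φ = 0` on `[ε,1]`. Substituting `x = β t`, resp. `x = α t`, the weight `|r| dx` on
`β([0,ε])` becomes `|β'| ρ(t) |r(α t)| dt`, while the one on `α([0,ε])` becomes `|α'| |r(α t)| dt`.
Hence `ρ ≤ R` makes the weighted measure on `β([0,ε])` at most `|β'| R / |α'|` times the
push-forward of the weighted measure on `α([0,ε])` under `α t ↦ β t`, and together with `|φ| ≤ 1`
this gives `‖Sf‖ ≤ (|β'| R / |α'|)^{1/2} |α'| ‖f‖ = (|α'| |β'| R)^{1/2} ‖f‖`. -/

section L2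

variable {α β E F : Type*} [MeasurableSpace α] [MeasurableSpace β] [NormedAddCommGroup E]
  [NormedAddCommGroup F] {μ : Measure α} {ν : Measure β}

theorem integral_norm_sq_eq_lpNorm_sq {u : α → E} (hu : AEStronglyMeasurable u μ) :
    ∫ x, ‖u x‖ ^ 2 ∂μ = lpNorm u 2 μ ^ 2 := by
  rw [lpNorm_eq_integral_norm_rpow_toReal two_ne_zero ENNReal.ofNat_ne_top hu]
  norm_num [← Real.sqrt_eq_rpow, Real.sq_sqrt (integral_nonneg fun x => sq_nonneg ‖u x‖)]

theorem integral_norm_sq_le_of_eLpNorm_le {u : α → E} {v : β → F} {c : ℝ} (hc : 0 ≤ c)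
    (hu : AEStronglyMeasurable u μ) (hv : MemLp v 2 ν)
    (h : eLpNorm u 2 μ ≤ ENNReal.ofReal √c * eLpNorm v 2 ν) :
    ∫ x, ‖u x‖ ^ 2 ∂μ ≤ c * ∫ y, ‖v y‖ ^ 2 ∂ν := by
  have hnorm : lpNorm u 2 μ ≤ √c * lpNorm v 2 ν := by
    have := ENNReal.toReal_mono (ENNReal.mul_ne_top ENNReal.ofReal_ne_top hv.eLpNorm_ne_top) h
    rwa [ENNReal.toReal_mul, ENNReal.toReal_ofReal (Real.sqrt_nonneg c), toReal_eLpNorm hu,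
      toReal_eLpNorm hv.aestronglyMeasurable] at this
  rw [integral_norm_sq_eq_lpNorm_sq hu, integral_norm_sq_eq_lpNorm_sq hv.aestronglyMeasurable]
  calc lpNorm u 2 μ ^ 2 ≤ (√c * lpNorm v 2 ν) ^ 2 := pow_le_pow_left₀ lpNorm_nonneg hnorm 2
    _ = c * lpNorm v 2 ν ^ 2 := by rw [mul_pow, Real.sq_sqrt hc]

end L2

section Transfer

variable {α β E F : Type*} [MeasurableSpace α] [MeasurableSpace β] [NormedAddCommGroup E]
  [NormedAddCommGroup F] {μ : Measure α} {ν : Measure β} {T : α → β} {K : Set β} {u : β → E}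
  {C : ENNReal}

theorem aestronglyMeasurable_of_restrict_le_smul_map (hK : MeasurableSet K)
    (hT : MeasurableEmbedding T) (hν : ν.restrict K ≤ C • μ.map T) (hu : u =ᵐ[ν] K.indicator u)
    (huT : AEStronglyMeasurable (u ∘ T) μ) : AEStronglyMeasurable u ν := by
  refine AEStronglyMeasurable.congr ?_ hu.symm
  rw [aestronglyMeasurable_indicator_iff hK]
  exact (hT.aestronglyMeasurable_map_iff.2 huT).mono_ac
    ((Measure.absolutelyContinuous_of_le hν).trans Measure.smul_absolutelyContinuous)

theorem eLpNorm_le_of_restrict_le_smul_map {p : ENNReal} (hp : p ≠ ⊤) {v : α → F} {c : ℝ}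
    (hK : MeasurableSet K) (hT : MeasurableEmbedding T) (hν : ν.restrict K ≤ C • μ.map T)
    (hu : u =ᵐ[ν] K.indicator u) (huv : ∀ᵐ x ∂μ, ‖u (T x)‖ ≤ c * ‖v x‖) :
    eLpNorm u p ν ≤ C ^ (1 / p).toReal * ENNReal.ofReal c * eLpNorm v p μ := by
  calc eLpNorm u p ν = eLpNorm u p (ν.restrict K) := by
        rw [eLpNorm_congr_ae hu, eLpNorm_indicator_eq_eLpNorm_restrict hK]
    _ ≤ eLpNorm u p (C • μ.map T) := eLpNorm_mono_measure _ hν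
    _ = C ^ (1 / p).toReal * eLpNorm (u ∘ T) p μ := by
        rw [eLpNorm_smul_measure_of_ne_top hp, hT.eLpNorm_map_measure, smul_eq_mul]
    _ ≤ C ^ (1 / p).toReal * (ENNReal.ofReal c * eLpNorm v p μ) := by
        gcongr; exact eLpNorm_le_mul_eLpNorm_of_ae_le_mul huv p
    _ = C ^ (1 / p).toReal * ENNReal.ofReal c * eLpNorm v p μ := (mul_assoc ..).symm

end Transfer

section WeightedMeasure

variable {r : ℝ → ℝ}

theorem wM_restrict_image {f f' : ℝ → ℝ} {s I : Set ℝ} (hI : MeasurableSet I)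
    (hfm : Measurable f) (hf' : ∀ x ∈ I, HasDerivWithinAt f (f' x) I x) (hf : InjOn f I)
    (hIs : f '' I ⊆ s) :
    (wM r s).restrict (f '' I) = Measure.map f ((volume.restrict I).withDensity
      fun t => ENNReal.ofReal |f' t| * ENNReal.ofReal |r (f t)|) := by
  ext A hA
  have hAI : MeasurableSet (f ⁻¹' A ∩ I) := (hfm hA).inter hI
  rw [Measure.restrict_apply hA, Measure.map_apply hfm hA, withDensity_apply _ (hfm hA),
    wM, withDensity_apply' _, Measure.restrict_restrict' hI,
    Measure.restrict_restrict_of_subset (inter_subset_right.trans hIs), inter_comm,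
    ← image_inter_preimage, inter_comm]
  exact lintegral_image_eq_lintegral_abs_deriv_mul hAI
    (fun x hx => (hf' x hx.2).mono inter_subset_right) (hf.mono inter_subset_right) _

theorem wM_restrict_image_le_smul_map {f g f' g' T : ℝ → ℝ} {s s' I : Set ℝ} {C : ℝ}
    (hI : MeasurableSet I) (hfm : Measurable f) (hgm : Measurable g) (hTm : Measurable T)
    (hf' : ∀ x ∈ I, HasDerivWithinAt f (f' x) I x) (hg' : ∀ x ∈ I, HasDerivWithinAt g (g' x) I x)
    (hf : InjOn f I) (hg : InjOn g I) (hIs : f '' I ⊆ s) (hIs' : g '' I ⊆ s')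
    (hTfg : ∀ t ∈ I, T (f t) = g t) (hC : 0 ≤ C)
    (hdens : ∀ᵐ t ∂volume.restrict I, |g' t| * |r (g t)| ≤ C * (|f' t| * |r (f t)|)) :
    (wM r s').restrict (g '' I) ≤
      ENNReal.ofReal C • Measure.map T ((wM r s).restrict (f '' I)) := by
  rw [wM_restrict_image hI hgm hg' hg hIs', wM_restrict_image hI hfm hf' hf hIs,
    Measure.map_map hTm hfm, ← Measure.map_smul, ← withDensity_smul' _ _ ENNReal.ofReal_ne_top,
    Measure.map_congr (f := T ∘ f) (g := g) ((withDensity_absolutelyContinuous _ _).ae_le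
      ((ae_restrict_mem hI).mono hTfg))]
  refine Measure.map_mono (withDensity_mono ?_) hgm
  filter_upwards [hdens] with t ht
  simp only [Pi.smul_apply, smul_eq_mul, ← ENNReal.ofReal_mul (abs_nonneg _),
    ← ENNReal.ofReal_mul hC]
  exact ENNReal.ofReal_le_ofReal ht

theorem integral_wM {s : Set ℝ} (hr : AEMeasurable r (volume.restrict s))
    (g : ℝ → ℝ) : ∫ x, g x ∂wM r s = ∫ x in s, g x * |r x| := by
  rw [wM, integral_withDensity_eq_integral_toReal_smul₀ hr.abs.ennreal_ofReal
    (ae_of_all _ fun _ => ENNReal.ofReal_lt_top)]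
  simp only [ENNReal.toReal_ofReal (abs_nonneg _), smul_eq_mul, mul_comm]

end WeightedMeasure

theorem hasDerivAt_affine (a c t : ℝ) : HasDerivAt (fun t => a + c * t) c t := by
  simpa using ((hasDerivAt_id t).const_mul c).const_add a

theorem measurableEmbedding_affine (a : ℝ) {c : ℝ} (hc : c ≠ 0) :
    MeasurableEmbedding fun t => a + c * t :=
  (measurableEmbedding_addLeft a).comp (measurableEmbedding_mulLeft₀ hc)

theorem quasiMeasurePreserving_affine (a : ℝ) {c : ℝ} (hc : c ≠ 0) :
    Measure.QuasiMeasurePreserving (fun t => a + c * t) :=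
  (measurePreserving_add_left volume a).quasiMeasurePreserving.comp
    (Measure.quasiMeasurePreserving_smul volume hc)

theorem Icc_min_max_subset {a a1 : ℝ}
    (h : (a = -1 ∧ a1 = 0) ∨ (a = 0 ∧ a1 = -1) ∨ (a = 0 ∧ a1 = 1) ∨ (a = 1 ∧ a1 = 0)) :
    Icc (min a a1) (max a a1) ⊆ Icc (-1) 1 := by
  rcases h with ⟨rfl, rfl⟩ | ⟨rfl, rfl⟩ | ⟨rfl, rfl⟩ | ⟨rfl, rfl⟩ <;>
    exact Icc_subset_Icc (by norm_num) (by norm_num)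

theorem Coeffs.ae_ne_zero {p q r : ℝ → ℝ} (hc : Coeffs p q r) :
    ∀ᵐ x, x ∈ Icc (-1 : ℝ) 1 → r x ≠ 0 := by
  filter_upwards [(ae_restrict_iff' measurableSet_Icc).1 hc.2.2.2] with x hx hmem h0
  simpa [h0] using (hx hmem).2

theorem Coeffs.aemeasurable_restrict {p q r : ℝ → ℝ} (hc : Coeffs p q r) {s : Set ℝ}
    (hs : s ⊆ Icc (-1) 1) : AEMeasurable r (volume.restrict s) :=
  (hc.2.2.1.mono_set hs).aemeasurable

namespace Setup

variable {p q r : ℝ → ℝ} (X : Setup p r)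

def α (t : ℝ) : ℝ := X.a + X.α' * t

def β (t : ℝ) : ℝ := X.b + X.β' * t

def αInv (x : ℝ) : ℝ := (x - X.a) / X.α'

theorem αInv_α (t : ℝ) : X.αInv (X.α t) = t := by
  simp [αInv, α, X.hα']

theorem measurableEmbedding_β_comp_αInv : MeasurableEmbedding (X.β ∘ X.αInv) := by
  have hαInv : X.αInv = fun x => -X.a / X.α' + X.α'⁻¹ * x := by
    ext x; simp only [αInv]; field_simp; ring
  rw [hαInv]
  exact (measurableEmbedding_affine _ X.hβ').comp
    (measurableEmbedding_affine _ (inv_ne_zero X.hα'))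

theorem iInt_subset : X.iInt ⊆ Icc (-1) 1 := Icc_min_max_subset X.hab

theorem jInt_subset : X.jInt ⊆ Icc (-1) 1 := Icc_min_max_subset X.hbb

theorem Sf_β (f : ℝ → ℂ) {t : ℝ} (ht : t ∈ Icc 0 X.ε) :
    X.Sf f (X.β t) = ((|X.α'| : ℝ) : ℂ) * f (X.α t) * (X.φ t : ℂ) := by
  have hinv : Function.invFunOn X.β1 (Icc 0 1) (X.β t) = t := by
    rw [β, ← X.hβ1eq t ht]
    exact X.hβ1bij.injOn.leftInvOn_invFunOn ⟨ht.1, ht.2.trans X.hε1⟩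
  rw [Sf, hinv, X.hα1eq t ht, α]

theorem Sf_eq_zero (f : ℝ → ℂ) {x : ℝ} (hx : x ∈ X.jInt) (hxK : x ∉ X.β '' Icc 0 X.ε) :
    X.Sf f x = 0 := by
  have hu := X.hβ1bij.surjOn.mapsTo_invFunOn hx
  have hxu := X.hβ1bij.surjOn.rightInvOn_invFunOn hx
  set u := Function.invFunOn X.β1 (Icc 0 1) x
  have hεu : X.ε ≤ u := by
    by_contra! h
    exact hxK ⟨u, ⟨hu.1, h.le⟩, by rw [β, ← X.hβ1eq u ⟨hu.1, h.le⟩, hxu]⟩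
  simp [Sf, u, X.hφ0 u ⟨hεu, hu.2⟩]

theorem nonneg_of_forall_ρ_le {R : ℝ} (hR : ∀ t ∈ Icc (0 : ℝ) X.ε, X.ρ t ≤ R) : 0 ≤ R :=
  (X.ρnn 0 ⟨le_rfl, X.hε.le⟩).trans (hR 0 ⟨le_rfl, X.hε.le⟩)

-- `ρ = |r ∘ β| / |r ∘ α|` says nothing about `r ∘ β` where `r ∘ α = 0` (division by zero gives
-- `0`); this is excluded a.e. by `x r(x) > 0`.
theorem ae_abs_r_β_le (hc : Coeffs p q r) {R : ℝ} (hR : ∀ t ∈ Icc (0 : ℝ) X.ε, X.ρ t ≤ R) :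
    ∀ᵐ t ∂volume.restrict (Icc 0 X.ε), |r (X.β t)| ≤ R * |r (X.α t)| := by
  filter_upwards [ae_restrict_of_ae ((quasiMeasurePreserving_affine X.a X.hα').ae hc.ae_ne_zero),
    ae_restrict_of_ae (Measure.ae_ne volume 0), ae_restrict_mem measurableSet_Icc]
    with t hr ht0 ht
  have hrα : |r (X.α t)| ≠ 0 := abs_ne_zero.2 (hr (X.iInt_subset (X.mapsα t ht)))
  have hρ : |r (X.β t)| = X.ρ t * |r (X.α t)| := by
    rw [X.ρeq t ⟨lt_of_le_of_ne ht.1 (Ne.symm ht0), ht.2⟩]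
    exact (div_mul_cancel₀ _ hrα).symm
  rw [hρ]
  exact mul_le_mul_of_nonneg_right (hR t ht) (abs_nonneg _)

theorem wM_restrict_le (hc : Coeffs p q r) {R : ℝ} (hR : ∀ t ∈ Icc (0 : ℝ) X.ε, X.ρ t ≤ R) :
    (wM r X.jInt).restrict (X.β '' Icc 0 X.ε) ≤ ENNReal.ofReal (|X.β'| * R / |X.α'|) •
      ((wM r X.iInt).restrict (X.α '' Icc 0 X.ε)).map (X.β ∘ X.αInv) := by
  have hR0 := X.nonneg_of_forall_ρ_le hR
  have hα := measurableEmbedding_affine X.a X.hα'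
  have hβ := measurableEmbedding_affine X.b X.hβ'
  refine wM_restrict_image_le_smul_map measurableSet_Icc hα.measurable hβ.measurable
    X.measurableEmbedding_β_comp_αInv.measurable
    (fun t _ => (hasDerivAt_affine X.a X.α' t).hasDerivWithinAt)
    (fun t _ => (hasDerivAt_affine X.b X.β' t).hasDerivWithinAt)
    hα.injective.injOn hβ.injective.injOn (mapsTo_iff_image_subset.1 X.mapsα)
    (mapsTo_iff_image_subset.1 X.mapsβ) (fun t _ => congrArg X.β (X.αInv_α t))
    (by positivity) ?_
  filter_upwards [X.ae_abs_r_β_le hc hR] with t ht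
  have hα' : |X.α'| ≠ 0 := abs_ne_zero.2 X.hα'
  calc |X.β'| * |r (X.β t)| ≤ |X.β'| * (R * |r (X.α t)|) := by gcongr
    _ = |X.β'| * R / |X.α'| * (|X.α'| * |r (X.α t)|) := by field_simp

theorem measurableSet_α_image : MeasurableSet (X.α '' Icc 0 X.ε) :=
  (measurableEmbedding_affine X.a X.hα').measurableSet_image.2 measurableSet_Icc

theorem measurableSet_β_image : MeasurableSet (X.β '' Icc 0 X.ε) :=
  (measurableEmbedding_affine X.b X.hβ').measurableSet_image.2 measurableSet_Icc

theorem Sf_ae_eq_indicator (f : ℝ → ℂ) :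
    X.Sf f =ᵐ[wM r X.jInt] (X.β '' Icc 0 X.ε).indicator (X.Sf f) := by
  filter_upwards [(withDensity_absolutelyContinuous _ _).ae_le
    (ae_restrict_mem (measurableSet_Icc : MeasurableSet X.jInt))] with x hx
  by_cases hxK : x ∈ X.β '' Icc 0 X.ε
  · rw [indicator_of_mem hxK]
  · rw [indicator_of_notMem hxK, X.Sf_eq_zero f hx hxK]

theorem norm_Sf_β_le (f : ℝ → ℂ) {t : ℝ} (ht : t ∈ Icc 0 X.ε) :
    ‖X.Sf f (X.β t)‖ ≤ |X.α'| * ‖f (X.α t)‖ := by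
  have hφ := X.hφmaps t ⟨ht.1, ht.2.trans X.hε1⟩
  rw [X.Sf_β f ht, norm_mul, norm_mul, Complex.norm_real, Complex.norm_real, Real.norm_eq_abs,
    abs_abs, Real.norm_eq_abs]
  calc |X.α'| * ‖f (X.α t)‖ * |X.φ t| ≤ |X.α'| * ‖f (X.α t)‖ * 1 := by
        gcongr; exact abs_le.2 ⟨by linarith [hφ.1], hφ.2⟩
    _ = |X.α'| * ‖f (X.α t)‖ := mul_one _

theorem aestronglyMeasurable_Sf (hc : Coeffs p q r) {R : ℝ}
    (hR : ∀ t ∈ Icc (0 : ℝ) X.ε, X.ρ t ≤ R) {f : ℝ → ℂ}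
    (hf : AEStronglyMeasurable f (wM r X.iInt)) : AEStronglyMeasurable (X.Sf f) (wM r X.jInt) := by
  refine aestronglyMeasurable_of_restrict_le_smul_map X.measurableSet_β_image
    X.measurableEmbedding_β_comp_αInv (X.wM_restrict_le hc hR) (X.Sf_ae_eq_indicator f) ?_
  have hφ : ContinuousOn (fun x => (X.φ (X.αInv x) : ℂ)) (X.α '' Icc 0 X.ε) := by
    refine Complex.continuous_ofReal.comp_continuousOn
      (X.hφC.continuousOn.comp (by fun_prop [αInv]) ?_)
    rintro _ ⟨t, ht, rfl⟩
    rw [X.αInv_α]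
    exact ⟨ht.1, ht.2.trans X.hε1⟩
  refine (((hf.restrict).const_mul ((|X.α'| : ℝ) : ℂ)).mul
    (hφ.aestronglyMeasurable X.measurableSet_α_image)).congr ?_
  filter_upwards [ae_restrict_mem X.measurableSet_α_image] with x ⟨t, ht, hx⟩
  subst hx
  simp [X.αInv_α, X.Sf_β f ht]

theorem eLpNorm_Sf_le (hc : Coeffs p q r) {R : ℝ} (hR : ∀ t ∈ Icc (0 : ℝ) X.ε, X.ρ t ≤ R)
    (f : ℝ → ℂ) :
    eLpNorm (X.Sf f) 2 (wM r X.jInt) ≤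
      ENNReal.ofReal √(|X.α'| * |X.β'| * R) * eLpNorm f 2 (wM r X.iInt) := by
  have hR0 := X.nonneg_of_forall_ρ_le hR
  have hconst : ENNReal.ofReal (|X.β'| * R / |X.α'|) ^ (1 / (2 : ENNReal)).toReal *
      ENNReal.ofReal |X.α'| = ENNReal.ofReal √(|X.α'| * |X.β'| * R) := by
    have hsq : |X.α'| * |X.β'| * R = |X.β'| * R / |X.α'| * (|X.α'| * |X.α'|) := by
      field_simp [abs_ne_zero.2 X.hα']
    rw [show (1 / (2 : ENNReal)).toReal = 1 / 2 by norm_num,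
      ENNReal.ofReal_rpow_of_nonneg (by positivity) (by norm_num), ← Real.sqrt_eq_rpow,
      ← ENNReal.ofReal_mul (Real.sqrt_nonneg _), hsq, Real.sqrt_mul (by positivity),
      Real.sqrt_mul_self (abs_nonneg _)]
  calc eLpNorm (X.Sf f) 2 (wM r X.jInt)
      ≤ ENNReal.ofReal (|X.β'| * R / |X.α'|) ^ (1 / (2 : ENNReal)).toReal *
          ENNReal.ofReal |X.α'| * eLpNorm f 2 ((wM r X.iInt).restrict (X.α '' Icc 0 X.ε)) := by
        refine eLpNorm_le_of_restrict_le_smul_map (v := f) ENNReal.ofNat_ne_top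
          X.measurableSet_β_image X.measurableEmbedding_β_comp_αInv (X.wM_restrict_le hc hR)
          (X.Sf_ae_eq_indicator f) ?_
        filter_upwards [ae_restrict_mem X.measurableSet_α_image] with x ⟨t, ht, hx⟩
        subst hx
        simpa [X.αInv_α] using X.norm_Sf_β_le f ht
    _ ≤ ENNReal.ofReal (|X.β'| * R / |X.α'|) ^ (1 / (2 : ENNReal)).toReal *
          ENNReal.ofReal |X.α'| * eLpNorm f 2 (wM r X.iInt) := by
        gcongr
        exact Measure.restrict_le_self
    _ = ENNReal.ofReal √(|X.α'| * |X.β'| * R) * eLpNorm f 2 (wM r X.iInt) := by rw [hconst]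

end Setup

/-- **Boundedness of `S` (from the proof of Theorem 3.2).** If `R` is an upper bound of
`ρ` on `[0,ε]`, then for every `f ∈ L_{2,|r|}(ι)` one has `Sf ∈ L_{2,|r|}(ȷ)` with
`∫_ȷ |Sf|² |r| ≤ |α'| |β'| R ∫_ι |f|² |r|`; in particular `S` is bounded with norm at
most `(|α'| |β'| R)^{1/2}`. -/
theorem S_bounded (p q r : ℝ → ℝ) (hc : Coeffs p q r) (X : Setup p r)
    (R : ℝ) (hR : ∀ t ∈ Set.Icc (0 : ℝ) X.ε, X.ρ t ≤ R) :
    ∀ f : ℝ → ℂ, MemLp f 2 (wM r X.iInt) →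
      MemLp (X.Sf f) 2 (wM r X.jInt) ∧
      (∫ x in X.jInt, ‖X.Sf f x‖ ^ 2 * |r x|) ≤
        |X.α'| * |X.β'| * R * ∫ x in X.iInt, ‖f x‖ ^ 2 * |r x| ∧
      eLpNorm (X.Sf f) 2 (wM r X.jInt) ≤
        ENNReal.ofReal (Real.sqrt (|X.α'| * |X.β'| * R)) * eLpNorm f 2 (wM r X.iInt) := by
  intro f hf
  have hR0 := X.nonneg_of_forall_ρ_le hR
  have hmeas := X.aestronglyMeasurable_Sf hc hR hf.1
  have hnorm := X.eLpNorm_Sf_le hc hR f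
  refine ⟨⟨hmeas, hnorm.trans_lt (ENNReal.mul_lt_top ENNReal.ofReal_lt_top hf.2)⟩, ?_, hnorm⟩
  rw [← integral_wM (hc.aemeasurable_restrict X.jInt_subset),
    ← integral_wM (hc.aemeasurable_restrict X.iInt_subset)]
  exact integral_norm_sq_le_of_eLpNorm_le (by positivity) hmeas hf hnorm

end SL
end
end

section
/- Let X₀ be a bounded linear operator on L_{2,|r|}(-1,1) with Hilbert-space adjoint X₀*, satisfying: (i) for every f ∈ L_{2,|r|}(-1,1), (X₀*f)(x) = 0 for almost every x with 1/2 ≤ |x| ≤ 1; (ii) X₀ maps F_max into F_max; (iii) (X₀f)(0) = f(0) for all f ∈ F_max; (iv) for every f ∈ F_max, the restrictions of X₀*f to [-1,0] and [0,1] lie in F_max([-1,0]) and F_max([0,1]) respectively; (v) (X₀*f)(0+) + (X₀*f)(0-) = -2·f(0) for all f ∈ F_max. Then the operator W₀ := J₀(X₀*X₀ + I) satisfies: W₀ is bounded; J₀W₀ - I = X₀*X₀ is nonnegative on the Hilbert space L_{2,|r|}(-1,1); W₀ is boundedly invertible and positive in the Krein space ([W₀f, f] > 0 for all f ≠ 0);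 (W₀f)(x) = (J₀f)(x) for almost every x with 1/2 ≤ |x| ≤ 1, for all f; and W₀ maps F_max into F_max. -/
/-!
Since `J₀² = I`, `J₀W₀ = X₀*X₀ + I =: T`, and `⟨f, Tf⟩ = ‖X₀f‖² + ‖f‖²`. Thus `T ≥ I` is a
strictly positive element of the C*-algebra of bounded operators, hence invertible, and so is
`W₀ = J₀T`. Because `sgn(r)·r = |r|`, the Krein form `[W₀f, f] = [J₀Tf, f]` equals the Hilbert
form `⟨f, Tf⟩ > 0`. Condition (i) kills `X₀*X₀f` on `1/2 ≤ |x|`. For `f ∈ F_max`, `W₀f` is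
`-(X₀*X₀f + f)` on `[-1, 0]` and `X₀*X₀f + f` on `[0, 1]`; by (ii) and (iv) both pieces are
absolutely continuous with finite energy, and by (iii) and (v) their values at `0` agree, so they
glue to a representative of `W₀f` in `F_max`.
-/

open MeasureTheory Set Filter

noncomputable section

namespace SL

/-- The Hilbert space `L_{2,|r|}(-1,1)`. -/
abbrev Pa (r : ℝ → ℝ) := Lp ℂ 2 (wM r (Set.Icc (-1 : ℝ) 1))

end SL
namespace SL

lemma _root_.Real.sign_mul_self_eq_abs (x : ℝ) : Real.sign x * x = |x| := by
  rcases lt_trichotomy x 0 with h | rfl | h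
  · rw [Real.sign_of_neg h, abs_of_neg h]; ring
  · simp
  · rw [Real.sign_of_pos h, abs_of_pos h]; ring

lemma _root_.Real.sign_mul_sign_of_ne_zero {x : ℝ} (hx : x ≠ 0) :
    Real.sign x * Real.sign x = 1 := by
  rcases Real.sign_apply_eq_of_ne_zero x hx with h | h <;> rw [h] <;> norm_num

section WeightedMeasure

variable {r : ℝ → ℝ}

lemma wM_eq_restrict {I : Set ℝ} (hI : MeasurableSet I) :
    wM r I = (volume.withDensity fun x => ENNReal.ofReal |r x|).restrict I :=
  (restrict_withDensity hI _).symm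

lemma ae_wM_of_ae_restrict {I : Set ℝ} {P : ℝ → Prop} (h : ∀ᵐ x ∂volume.restrict I, P x) :
    ∀ᵐ x ∂wM r I, P x :=
  (withDensity_absolutelyContinuous _ _).ae_le h

lemma ae_wM_iff {I : Set ℝ} (hr : AEMeasurable r (volume.restrict I)) {P : ℝ → Prop} :
    (∀ᵐ x ∂wM r I, P x) ↔ ∀ᵐ x ∂volume.restrict I, r x ≠ 0 → P x := by
  rw [wM, ae_withDensity_iff' (by fun_prop)]
  simp

lemma ae_wM_mono {I J : Set ℝ} (hI : MeasurableSet I) (hJ : MeasurableSet J) (hIJ : I ⊆ J)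
    {P : ℝ → Prop} (h : ∀ᵐ x ∂wM r J, P x) : ∀ᵐ x ∂wM r I, P x := by
  rw [wM_eq_restrict hJ] at h
  rw [wM_eq_restrict hI]
  exact ae_restrict_of_ae_restrict_of_subset hIJ h

lemma ae_wM_Icc_of_Icc_of_Icc {a b c : ℝ} (hab : a ≤ b) (hbc : b ≤ c) {P : ℝ → Prop}
    (h₁ : ∀ᵐ x ∂wM r (Icc a b), P x) (h₂ : ∀ᵐ x ∂wM r (Icc b c), P x) :
    ∀ᵐ x ∂wM r (Icc a c), P x := by
  rw [wM_eq_restrict measurableSet_Icc] at h₁ h₂ ⊢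
  rw [← Icc_union_Icc_eq_Icc hab hbc, ae_restrict_union_iff]
  exact ⟨h₁, h₂⟩

lemma ae_wM_sign_eq_neg_one {s : Set ℝ} (hs : MeasurableSet s) (hs0 : s ⊆ Iic 0)
    (hxr : ∀ᵐ x ∂volume.restrict s, 0 < x * r x) : ∀ᵐ x ∂wM r s, Real.sign (r x) = -1 := by
  refine ae_wM_of_ae_restrict ?_
  filter_upwards [hxr, ae_restrict_mem hs] with x hx hxs
  rcases pos_and_pos_or_neg_and_neg_of_mul_pos hx with h | h
  · exact absurd (hs0 hxs) h.1.not_ge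
  · exact Real.sign_of_neg h.2

lemma ae_wM_sign_eq_one {s : Set ℝ} (hs : MeasurableSet s) (hs0 : s ⊆ Ici 0)
    (hxr : ∀ᵐ x ∂volume.restrict s, 0 < x * r x) : ∀ᵐ x ∂wM r s, Real.sign (r x) = 1 := by
  refine ae_wM_of_ae_restrict ?_
  filter_upwards [hxr, ae_restrict_mem hs] with x hx hxs
  rcases pos_and_pos_or_neg_and_neg_of_mul_pos hx with h | h
  · exact Real.sign_of_pos h.2
  · exact absurd (hs0 hxs) h.1.not_ge

end WeightedMeasure

lemma Coeffs.aemeasurable {p q r : ℝ → ℝ} (hc : Coeffs p q r) :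
    AEMeasurable p (volume.restrict (Icc (-1) 1)) := by
  refine (aemeasurable_congr ?_).mp hc.1.aestronglyMeasurable.aemeasurable.inv
  filter_upwards [hc.2.2.2] with x hx
  simp

lemma comp_self_eq_id_of_ae_eq_sign_mul {α : Type*} [MeasurableSpace α] {μ : Measure α}
    {r : α → ℝ} (hr : ∀ᵐ x ∂μ, r x ≠ 0) {J : Lp ℂ 2 μ →L[ℂ] Lp ℂ 2 μ}
    (hJ : ∀ f : Lp ℂ 2 μ, ⇑(J f) =ᵐ[μ] fun x => ((Real.sign (r x) : ℝ) : ℂ) * f x) :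
    J.comp J = ContinuousLinearMap.id ℂ (Lp ℂ 2 μ) := by
  ext f
  filter_upwards [hJ (J f), hJ f, hr] with x h₂ h₁ hx
  rw [ContinuousLinearMap.comp_apply, ContinuousLinearMap.id_apply, h₂, h₁, ← mul_assoc,
    ← Complex.ofReal_mul, Real.sign_mul_sign_of_ne_zero hx, Complex.ofReal_one, one_mul]

section Hilbert

variable {E : Type*} [NormedAddCommGroup E] [InnerProductSpace ℂ E] [CompleteSpace E]

lemma inner_adjoint_comp_self_add_id_apply (X : E →L[ℂ] E) (f : E) :
    inner ℂ f (((ContinuousLinearMap.adjoint X).comp X + ContinuousLinearMap.id ℂ E) f)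
      = ((‖X f‖ ^ 2 + ‖f‖ ^ 2 : ℝ) : ℂ) := by
  rw [add_apply, inner_add_right, ContinuousLinearMap.comp_apply,
    ContinuousLinearMap.adjoint_inner_right, ContinuousLinearMap.id_apply,
    inner_self_eq_norm_sq_to_K, inner_self_eq_norm_sq_to_K]
  norm_cast

lemma isUnit_adjoint_comp_self_add_id (X : E →L[ℂ] E) :
    IsUnit ((ContinuousLinearMap.adjoint X).comp X + ContinuousLinearMap.id ℂ E) := by
  have h := IsStrictlyPositive.nonneg_add (star_mul_self_nonneg X) isStrictlyPositive_one
  rw [ContinuousLinearMap.star_eq_adjoint, ContinuousLinearMap.mul_def,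
    ContinuousLinearMap.one_def] at h
  exact h.isUnit

end Hilbert

/-- `sgn(r) · r = |r|` turns the Krein form into the Hilbert form. -/
lemma krein0_eq_inner {r : ℝ → ℝ} (hr : AEMeasurable r (volume.restrict (Icc (-1) 1)))
    {u : ℝ → ℂ} {g h : Pa r}
    (hu : u =ᵐ[wM r (Icc (-1) 1)] fun x => ((Real.sign (r x) : ℝ) : ℂ) * g x) :
    krein0 r u h = inner ℂ h g := by
  have hu' := (ae_wM_iff hr).mp hu
  calc krein0 r u h
      = ∫ x in Icc (-1) 1, (ENNReal.ofReal |r x|).toReal • (g x * starRingEnd ℂ (h x)) := by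
        refine integral_congr_ae ?_
        filter_upwards [hu'] with x hx
        rcases eq_or_ne (r x) 0 with hr0 | hr0
        · simp [hr0]
        · rw [hx hr0, ENNReal.toReal_ofReal (abs_nonneg _), ← Real.sign_mul_self_eq_abs,
            Complex.real_smul]
          push_cast
          ring
    _ = ∫ x, g x * starRingEnd ℂ (h x) ∂wM r (Icc (-1) 1) :=
        (integral_withDensity_eq_integral_toReal_smul₀ (by fun_prop)
          (Eventually.of_forall fun _ => ENNReal.ofReal_lt_top) _).symm
    _ = inner ℂ h g := by
        rw [L2.inner_def]
        rfl

section AbsolutelyContinuous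

variable {g g' u u' v v' : ℝ → ℂ} {a b c d : ℝ}

lemma ACOn.neg (h : ACOn g g' a b) : ACOn (-g) (-g') a b :=
  ⟨h.1.neg, fun x hx => by simp [h.2 x hx, intervalIntegral.integral_neg]; ring⟩

lemma ACOn.add (hu : ACOn u u' a b) (hv : ACOn v v' a b) : ACOn (u + v) (u' + v') a b := by
  refine ⟨hu.1.add hv.1, fun x hx => ?_⟩
  have hsub : uIcc a x ⊆ uIcc a b := uIcc_subset_uIcc_left (Icc_subset_uIcc hx)
  simp only [Pi.add_apply]
  rw [hu.2 x hx, hv.2 x hx, intervalIntegral.integral_add (hu.1.mono_set hsub) (hv.1.mono_set hsub)]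
  ring

lemma ACOn.mono (h : ACOn g g' a b) (hac : a ≤ c) (hcd : c ≤ d) (hdb : d ≤ b) :
    ACOn g g' c d := by
  have hsub : ∀ {x y}, x ∈ Icc a b → y ∈ Icc a b → uIcc x y ⊆ uIcc a b := fun hx hy =>
    uIcc_subset_uIcc (Icc_subset_uIcc hx) (Icc_subset_uIcc hy)
  have hc : c ∈ Icc a b := ⟨hac, hcd.trans hdb⟩
  refine ⟨h.1.mono_set (hsub hc ⟨hac.trans hcd, hdb⟩), fun x hx => ?_⟩
  have hx' : x ∈ Icc a b := ⟨hac.trans hx.1, hx.2.trans hdb⟩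
  rw [h.2 x hx', h.2 c hc, add_assoc, intervalIntegral.integral_add_adjacent_intervals
    (h.1.mono_set (hsub ⟨le_rfl, hac.trans hc.2⟩ hc)) (h.1.mono_set (hsub hc hx'))]

/-- The derivative is glued with `≤` so that it agrees with `u'` on all of `[a, c]`. -/
lemma ACOn.piecewise (hu : ACOn u u' a c) (hv : ACOn v v' c b) (hac : a ≤ c) (hcb : c ≤ b)
    (huv : u c = v c) :
    ACOn (fun x => if x ≤ c then u x else v x) (fun x => if x ≤ c then u' x else v' x) a b := by
  have hL : ∀ x ∈ Icc a c,
      ∫ t in a..x, (if t ≤ c then u' t else v' t) = ∫ t in a..x, u' t := fun x hx =>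
    intervalIntegral.integral_congr fun t ht => by
      rw [uIcc_of_le hx.1] at ht
      simp [ht.2.trans hx.2]
  have hR : ∀ x, c ≤ x →
      ∫ t in c..x, (if t ≤ c then u' t else v' t) = ∫ t in c..x, v' t := fun x hcx =>
    intervalIntegral.integral_congr_ae (Eventually.of_forall fun t ht => by
      rw [uIoc_of_le hcx] at ht
      simp [not_le.mpr ht.1])
  have hLi : IntervalIntegrable (fun t => if t ≤ c then u' t else v' t) volume a c :=
    hu.1.congr fun t ht => by
      rw [uIoc_of_le hac] at ht
      simp [ht.2]
  have hRi : IntervalIntegrable (fun t => if t ≤ c then u' t else v' t) volume c b :=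
    hv.1.congr fun t ht => by
      rw [uIoc_of_le hcb] at ht
      simp [not_le.mpr ht.1]
  refine ⟨hLi.trans hRi, fun x hx => ?_⟩
  simp only [if_pos hac]
  rcases le_or_gt x c with hxc | hcx
  · rw [if_pos hxc, hL x ⟨hx.1, hxc⟩, hu.2 x ⟨hx.1, hxc⟩]
  · rw [if_neg (not_le.mpr hcx), hv.2 x ⟨hcx.le, hx.2⟩, ← huv, hu.2 c ⟨hac, le_rfl⟩, ← hR x hcx.le,
      ← hL c ⟨hac, le_rfl⟩, add_assoc, intervalIntegral.integral_add_adjacent_intervals hLi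
      (hRi.mono_set (uIcc_subset_uIcc_left (Icc_subset_uIcc ⟨hcx.le, hx.2⟩)))]

lemma ACOn.aestronglyMeasurable (h : ACOn g g' a b) (hab : a ≤ b) :
    AEStronglyMeasurable g' (volume.restrict (Icc a b)) :=
  ((intervalIntegrable_iff_integrableOn_Icc_of_le hab).mp h.1).aestronglyMeasurable

end AbsolutelyContinuous

lemma integrable_mul_norm_add_sq {α E : Type*} [MeasurableSpace α] {μ : Measure α}
    [NormedAddCommGroup E] {p : α → ℝ} {u v : α → E} (hp : AEMeasurable p μ)
    (hp0 : ∀ᵐ x ∂μ, 0 ≤ p x) (hu : AEStronglyMeasurable u μ) (hv : AEStronglyMeasurable v μ)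
    (hU : Integrable (fun x => p x * ‖u x‖ ^ 2) μ) (hV : Integrable (fun x => p x * ‖v x‖ ^ 2) μ) :
    Integrable (fun x => p x * ‖u x + v x‖ ^ 2) μ := by
  refine ((hU.const_mul 2).add (hV.const_mul 2)).mono'
    (hp.mul ((hu.add hv).norm.aemeasurable.pow_const 2)).aestronglyMeasurable ?_
  filter_upwards [hp0] with x hx
  have hsq : ‖u x + v x‖ ^ 2 ≤ 2 * ‖u x‖ ^ 2 + 2 * ‖v x‖ ^ 2 := by
    nlinarith [norm_add_le (u x) (v x), norm_nonneg (u x + v x), sq_nonneg (‖u x‖ - ‖v x‖)]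
  rw [Real.norm_of_nonneg (by positivity), Pi.add_apply]
  nlinarith [mul_le_mul_of_nonneg_left hsq hx]

/-- The conditions that `InFmax` imposes on a representative `g` with derivative `g'`. -/
def IsFmaxRep (p : ℝ → ℝ) (g g' : ℝ → ℂ) (a b : ℝ) : Prop :=
  ACOn g g' a b ∧ IntegrableOn (fun x => p x * ‖g' x‖ ^ 2) (Icc a b)

namespace IsFmaxRep

variable {p : ℝ → ℝ} {g g' u u' v v' : ℝ → ℂ} {a b c d : ℝ}

lemma neg (h : IsFmaxRep p g g' a b) : IsFmaxRep p (-g) (-g') a b :=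
  ⟨h.1.neg, by simpa using h.2⟩

lemma add (hab : a ≤ b) (hp : AEMeasurable p (volume.restrict (Icc a b)))
    (hp0 : ∀ᵐ x ∂volume.restrict (Icc a b), 0 ≤ p x)
    (hu : IsFmaxRep p u u' a b) (hv : IsFmaxRep p v v' a b) :
    IsFmaxRep p (u + v) (u' + v') a b :=
  ⟨hu.1.add hv.1, integrable_mul_norm_add_sq hp hp0 (hu.1.aestronglyMeasurable hab)
    (hv.1.aestronglyMeasurable hab) hu.2 hv.2⟩

lemma mono (h : IsFmaxRep p g g' a b) (hac : a ≤ c) (hcd : c ≤ d) (hdb : d ≤ b) :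
    IsFmaxRep p g g' c d :=
  ⟨h.1.mono hac hcd hdb, h.2.mono_set (Icc_subset_Icc hac hdb)⟩

lemma piecewise (hu : IsFmaxRep p u u' a c) (hv : IsFmaxRep p v v' c b) (hac : a ≤ c)
    (hcb : c ≤ b) (huv : u c = v c) :
    IsFmaxRep p (fun x => if x ≤ c then u x else v x)
      (fun x => if x ≤ c then u' x else v' x) a b := by
  refine ⟨hu.1.piecewise hv.1 hac hcb huv, ?_⟩
  rw [← Icc_union_Icc_eq_Icc hac hcb]
  refine (hu.2.congr_fun (fun x hx => by simp [hx.2]) measurableSet_Icc).union ?_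
  rw [integrableOn_Icc_iff_integrableOn_Ioc]
  exact (hv.2.mono_set Ioc_subset_Icc_self).congr_fun (fun x hx => by simp [not_le.mpr hx.1])
    measurableSet_Ioc

end IsFmaxRep

lemma inFmax_of_ae_eq_pieces {p r : ℝ → ℝ} {h u u' v v' : ℝ → ℂ} {a b c : ℝ} (hac : a ≤ c)
    (hcb : c ≤ b) (hh : MemLp h 2 (wM r (Icc a b))) (hu : h =ᵐ[wM r (Icc a c)] u)
    (hv : h =ᵐ[wM r (Icc c b)] v) (hU : IsFmaxRep p u u' a c) (hV : IsFmaxRep p v v' c b)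
    (huv : u c = v c) : InFmax p r a b h := by
  refine ⟨hh, _, _, ae_wM_Icc_of_Icc_of_Icc hac hcb ?_ ?_, hU.piecewise hV hac hcb huv⟩
  · filter_upwards [hu, ae_wM_of_ae_restrict (ae_restrict_mem measurableSet_Icc)] with x hx hmem
    simp [hx, hmem.2]
  · filter_upwards [hv, ae_wM_of_ae_restrict (ae_restrict_mem measurableSet_Icc)] with x hx hmem
    split_ifs with hxc
    · obtain rfl := le_antisymm hxc hmem.1
      rwa [huv]
    · exact hx

lemma inFmax_sign_mul_add {p q r : ℝ → ℝ} (hc : Coeffs p q r)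
    {w A g g' Am Am' Ap Ap' : ℝ → ℂ} (hw : MemLp w 2 (wM r (Icc (-1) 1)))
    (hwA : w =ᵐ[wM r (Icc (-1) 1)] fun x => ((Real.sign (r x) : ℝ) : ℂ) * (A x + g x))
    (hg : IsFmaxRep p g g' (-1) 1)
    (hAm : A =ᵐ[wM r (Icc (-1) 0)] Am) (hAm' : IsFmaxRep p Am Am' (-1) 0)
    (hAp : A =ᵐ[wM r (Icc 0 1)] Ap) (hAp' : IsFmaxRep p Ap Ap' 0 1)
    (hjump : Ap 0 + Am 0 = -2 * g 0) : InFmax p r (-1) 1 w := by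
  have hL : Icc (-1 : ℝ) 0 ⊆ Icc (-1) 1 := Icc_subset_Icc le_rfl zero_le_one
  have hR : Icc (0 : ℝ) 1 ⊆ Icc (-1) 1 := Icc_subset_Icc (by norm_num) le_rfl
  have hpos : ∀ᵐ x ∂volume.restrict (Icc (-1 : ℝ) 1), 0 ≤ p x ∧ 0 < x * r x :=
    hc.2.2.2.mono fun x hx => ⟨hx.1.le, hx.2⟩
  have hwL : w =ᵐ[wM r (Icc (-1) 0)] -(Am + g) := by
    filter_upwards [ae_wM_mono measurableSet_Icc measurableSet_Icc hL hwA, hAm,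
      ae_wM_sign_eq_neg_one measurableSet_Icc (fun x hx => hx.2)
        ((ae_restrict_of_ae_restrict_of_subset hL hpos).mono fun x hx => hx.2)] with x hx hA hs
    simp [hx, hA, hs]
  have hwR : w =ᵐ[wM r (Icc 0 1)] Ap + g := by
    filter_upwards [ae_wM_mono measurableSet_Icc measurableSet_Icc hR hwA, hAp,
      ae_wM_sign_eq_one measurableSet_Icc (fun x hx => hx.1)
        ((ae_restrict_of_ae_restrict_of_subset hR hpos).mono fun x hx => hx.2)] with x hx hA hs
    simp [hx, hA, hs]
  have hRepL : IsFmaxRep p (-(Am + g)) (-(Am' + g')) (-1) 0 :=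
    (hAm'.add (by norm_num) (hc.aemeasurable.mono_set hL)
      ((ae_restrict_of_ae_restrict_of_subset hL hpos).mono fun x hx => hx.1)
      (hg.mono le_rfl (by norm_num) zero_le_one)).neg
  have hRepR : IsFmaxRep p (Ap + g) (Ap' + g') 0 1 :=
    hAp'.add zero_le_one (hc.aemeasurable.mono_set hR)
      ((ae_restrict_of_ae_restrict_of_subset hR hpos).mono fun x hx => hx.1)
      (hg.mono (by norm_num) zero_le_one le_rfl)
  refine inFmax_of_ae_eq_pieces (by norm_num) zero_le_one hw hwL hwR hRepL hRepR ?_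
  simp only [Pi.neg_apply, Pi.add_apply]
  linear_combination -hjump

/-- **Construction of `W₀` from `X₀` (from the proof of Theorem 4.2).** If `X₀` is a
bounded operator on `L_{2,|r|}(-1,1)` whose adjoint vanishes a.e. on `1/2 ≤ |x| ≤ 1`,
which maps `F_max` into `F_max` with `(X₀f)(0) = f(0)`, and whose adjoint maps `F_max`
into `F_max[-1,0] ⊕ F_max[0,1]` with `(X₀*f)(0+) + (X₀*f)(0-) = -2 f(0)`, then
`W₀ = J₀(X₀*X₀ + I)` is bounded, `J₀W₀ - I = X₀*X₀ ≥ 0`, `W₀` is boundedly invertible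
and positive in the Krein space, `W₀f = J₀f` a.e. on `1/2 ≤ |x| ≤ 1`, and
`W₀ F_max ⊆ F_max`. -/
theorem W0_of_X0 (p q r : ℝ → ℝ) (hc : Coeffs p q r)
    (X J0 : Pa r →L[ℂ] Pa r)
    (hJ0 : ∀ f : Pa r, (J0 f : ℝ → ℂ) =ᵐ[wM r (Set.Icc (-1 : ℝ) 1)]
      fun x => ((Real.sign (r x) : ℝ) : ℂ) * (f : ℝ → ℂ) x)
    -- (i)
    (hi : ∀ f : Pa r, ∀ᵐ x ∂(wM r (Set.Icc (-1 : ℝ) 1)),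
      1 / 2 ≤ |x| → ((ContinuousLinearMap.adjoint X) f : ℝ → ℂ) x = 0)
    -- (ii)
    (hii : ∀ f : Pa r, InFmax p r (-1) 1 ⇑f → InFmax p r (-1) 1 ⇑(X f))
    -- (iii)
    (hiii : ∀ (f : Pa r) (g g' : ℝ → ℂ), (⇑f =ᵐ[wM r (Set.Icc (-1 : ℝ) 1)] g) →
      ACOn g g' (-1) 1 →
      IntegrableOn (fun x => p x * ‖g' x‖ ^ 2) (Set.Icc (-1 : ℝ) 1) →
      ∀ G G' : ℝ → ℂ, (⇑(X f) =ᵐ[wM r (Set.Icc (-1 : ℝ) 1)] G) →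
        ACOn G G' (-1) 1 → G 0 = g 0)
    -- (iv)
    (hiv : ∀ f : Pa r, InFmax p r (-1) 1 ⇑f →
      InFmax p r (-1) 0 ⇑((ContinuousLinearMap.adjoint X) f) ∧
      InFmax p r 0 1 ⇑((ContinuousLinearMap.adjoint X) f))
    -- (v)
    (hv : ∀ (f : Pa r) (g g' : ℝ → ℂ), (⇑f =ᵐ[wM r (Set.Icc (-1 : ℝ) 1)] g) →
      ACOn g g' (-1) 1 →
      IntegrableOn (fun x => p x * ‖g' x‖ ^ 2) (Set.Icc (-1 : ℝ) 1) →
      ∀ Gm Gm' Gp Gp' : ℝ → ℂ,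
        (⇑((ContinuousLinearMap.adjoint X) f) =ᵐ[wM r (Set.Icc (-1 : ℝ) 0)] Gm) →
        ACOn Gm Gm' (-1) 0 →
        (⇑((ContinuousLinearMap.adjoint X) f) =ᵐ[wM r (Set.Icc (0 : ℝ) 1)] Gp) →
        ACOn Gp Gp' 0 1 →
        Gp 0 + Gm 0 = -2 * g 0)
    (W0 : Pa r →L[ℂ] Pa r)
    (hW0 : W0 = J0.comp ((ContinuousLinearMap.adjoint X).comp X +
      ContinuousLinearMap.id ℂ (Pa r))) :
    -- `J₀W₀ - I = X₀*X₀`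
    (J0.comp W0 = (ContinuousLinearMap.adjoint X).comp X +
      ContinuousLinearMap.id ℂ (Pa r)) ∧
    -- `X₀*X₀` is nonnegative on the Hilbert space
    (∀ f : Pa r,
      0 ≤ (inner ℂ ((((ContinuousLinearMap.adjoint X).comp X) f)) f : ℂ).re ∧
      (inner ℂ ((((ContinuousLinearMap.adjoint X).comp X) f)) f : ℂ).im = 0) ∧
    -- `W₀` is boundedly invertible
    (∃ V : Pa r →L[ℂ] Pa r, W0.comp V = ContinuousLinearMap.id ℂ (Pa r) ∧
      V.comp W0 = ContinuousLinearMap.id ℂ (Pa r)) ∧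
    -- and positive in the Krein space
    (∀ f : Pa r, f ≠ 0 →
      0 < (krein0 r ⇑(W0 f) ⇑f).re ∧ (krein0 r ⇑(W0 f) ⇑f).im = 0) ∧
    -- `W₀ f = J₀ f` a.e. on `1/2 ≤ |x| ≤ 1`
    (∀ f : Pa r, ∀ᵐ x ∂(wM r (Set.Icc (-1 : ℝ) 1)),
      1 / 2 ≤ |x| → (W0 f : ℝ → ℂ) x = ((Real.sign (r x) : ℝ) : ℂ) * (f : ℝ → ℂ) x) ∧
    -- `W₀ F_max ⊆ F_max`
    (∀ f : Pa r, InFmax p r (-1) 1 ⇑f → InFmax p r (-1) 1 ⇑(W0 f)) := by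
  set T := (ContinuousLinearMap.adjoint X).comp X + ContinuousLinearMap.id ℂ (Pa r)
  have hr : AEMeasurable r (volume.restrict (Icc (-1) 1)) := hc.2.2.1.aemeasurable
  have hJJ : J0.comp J0 = ContinuousLinearMap.id ℂ (Pa r) :=
    comp_self_eq_id_of_ae_eq_sign_mul
      (ae_wM_of_ae_restrict (hc.2.2.2.mono fun x hx => right_ne_zero_of_mul hx.2.ne')) hJ0
  have hW0T : ∀ f, W0 f = J0 (T f) := fun f => by rw [hW0]; rfl
  have hW0ae : ∀ f : Pa r, ⇑(W0 f) =ᵐ[wM r (Icc (-1) 1)] fun x =>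
      ((Real.sign (r x) : ℝ) : ℂ) * ((ContinuousLinearMap.adjoint X (X f) : Pa r) x + f x) := by
    intro f
    filter_upwards [hW0T f ▸ hJ0 (T f), Lp.coeFn_add (ContinuousLinearMap.adjoint X (X f)) f]
      with x hJ hadd
    rw [hJ]
    exact congrArg _ hadd
  refine ⟨by rw [hW0, ← ContinuousLinearMap.comp_assoc, hJJ, ContinuousLinearMap.id_comp],
    fun f => ?_, ?_, fun f hf => ?_, fun f => ?_, fun f hf => ?_⟩
  · rw [ContinuousLinearMap.comp_apply, ContinuousLinearMap.adjoint_inner_left]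
    exact ⟨inner_self_nonneg (𝕜 := ℂ), inner_self_im (𝕜 := ℂ) (X f)⟩
  · obtain ⟨V, hWV, hVW⟩ := isUnit_iff_exists.mp
      ((⟨J0, J0, hJJ, hJJ⟩ : (Pa r →L[ℂ] Pa r)ˣ).isUnit.mul (isUnit_adjoint_comp_self_add_id X))
    exact ⟨V, hW0 ▸ hWV, hW0 ▸ hVW⟩
  · rw [krein0_eq_inner hr (hW0T f ▸ hJ0 (T f)), inner_adjoint_comp_self_add_id_apply,
      Complex.ofReal_re, Complex.ofReal_im]
    exact ⟨by positivity, rfl⟩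
  · filter_upwards [hW0ae f, hi (X f)] with x hW hX hx
    rw [hW, hX hx, zero_add]
  · have hXf := hii f hf
    obtain ⟨⟨-, Am, Am', hAm, hAmAC, hAmE⟩, ⟨-, Ap, Ap', hAp, hApAC, hApE⟩⟩ := hiv (X f) hXf
    obtain ⟨-, g, g', hfg, hg, hgE⟩ := hf
    obtain ⟨-, G, G', hXG, hG, hGE⟩ := hXf
    have hjump : Ap 0 + Am 0 = -2 * g 0 := hiii f g g' hfg hg hgE G G' hXG hG ▸
      hv (X f) G G' hXG hG hGE Am Am' Ap Ap' hAm hAmAC hAp hApAC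
    refine inFmax_sign_mul_add hc (Lp.memLp _) ?_ ⟨hg, hgE⟩ hAm ⟨hAmAC, hAmE⟩ hAp ⟨hApAC, hApE⟩
      hjump
    filter_upwards [hW0ae f, hfg] with x hW hf
    rw [hW, hf]

end SL
end
end
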